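/- arXiv:2605.15174 — 3 statements merged into one kernel-verified Lean document; each statement's English description precedes it below -/
import Mathlib

section
/- For ε ∈ (0,1), δ ∈ (0, ε), and ν ∈ (0, δ), the binary fidelity satisfies F₂(ε−δ, 1−ε+ν) ≤ 4ε(1−ε+δ), where F₂(p,q) := (√(pq) + √((1−p)(1−q)))². -/
/-- The binary (squared classical) fidelity `F₂(p,q) = (√(pq) + √((1-p)(1-q)))²`. -/
noncomputable def binFidelity (p q : ℝ) : ℝ :=
  (Real.sqrt (p * q) + Real.sqrt ((1 - p) * (1 - q))) ^ 2

open Real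

theorem binFidelity_le_four_mul {p q c : ℝ} (hc : 0 ≤ c) (h₁ : p * q ≤ c)
    (h₂ : (1 - p) * (1 - q) ≤ c) : binFidelity p q ≤ 4 * c :=
  calc binFidelity p q ≤ (√c + √c) ^ 2 := by
        unfold binFidelity
        gcongr
    _ = 4 * c := by rw [← two_mul, mul_pow, sq_sqrt hc]; norm_num

theorem binary_fidelity_bound_general (ε δ ν : ℝ) (hε1 : ε < 1)
    (hδε : δ < ε) (hν0 : 0 < ν) (hνδ : ν < δ) :
    binFidelity (ε - δ) (1 - ε + ν) ≤ 4 * ε * (1 - ε + δ) := by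
  have hε : 0 ≤ ε := by linarith
  have hεδ : 0 ≤ 1 - ε + δ := by linarith
  rw [mul_assoc]
  refine binFidelity_le_four_mul (mul_nonneg hε hεδ) ?_ ?_
  · exact mul_le_mul (by linarith) (by linarith) (by linarith) hε
  · calc (1 - (ε - δ)) * (1 - (1 - ε + ν)) = (1 - ε + δ) * (ε - ν) := by ring
      _ ≤ (1 - ε + δ) * ε := mul_le_mul_of_nonneg_left (by linarith) hεδ
      _ = ε * (1 - ε + δ) := mul_comm _ _

theorem binary_fidelity_bound (ε δ ν : ℝ) (hε0 : 0 < ε) (hε1 : ε < 1)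
    (hδ0 : 0 < δ) (hδε : δ < ε) (hν0 : 0 < ν) (hνδ : ν < δ) :
    binFidelity (ε - δ) (1 - ε + ν) ≤ 4 * ε * (1 - ε + δ) :=
  binary_fidelity_bound_general ε δ ν hε1 hδε hν0 hνδ
end

section
/- Approximate quasi-concavity of the smooth max-relative entropy: let (p(x), ρ_x)_{x∈X} be a finite ensemble of density matrices and σ another density matrix on the same finite-dimensional Hilbert space. Then for all ε, μ ∈ (0,1) with ε + μ ≤ 1, min_x D_max^{ε+μ,P}(ρ_x‖σ) ≤ D_max^{ε,P}(Σ_x p(x) ρ_x ‖ σ) + log(|X| / ((ε+μ)² − ε²)). -/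
open scoped ComplexOrder BigOperators

noncomputable section

/-- Trace norm `‖A‖₁ = Tr √(AᴴA)`. -/
noncomputable def traceNorm {n : Type*} [Fintype n] [DecidableEq n] (A : Matrix n n ℂ) : ℝ :=
  (((Matrix.posSemidef_conjTranspose_mul_self A).1.eigenvectorUnitary.1 *
      Matrix.diagonal (((↑) : ℝ → ℂ) ∘ (√·) ∘ (Matrix.posSemidef_conjTranspose_mul_self A).1.eigenvalues) *
      (star (Matrix.posSemidef_conjTranspose_mul_self A).1.eigenvectorUnitary : Matrix n n ℂ)).trace).re

/-- Positive-semidefinite square root (junk value `0` off PSD matrices). -/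
noncomputable def psqrt {n : Type*} [Fintype n] [DecidableEq n] (A : Matrix n n ℂ) :
    Matrix n n ℂ :=
  open scoped Classical in
  if h : A.PosSemidef then
    h.1.eigenvectorUnitary.1 * Matrix.diagonal ((↑) ∘ (√·) ∘ h.1.eigenvalues) *
      (star h.1.eigenvectorUnitary : Matrix n n ℂ) else 0

/-- Fidelity `F(ρ,σ) = ‖√ρ √σ‖₁`. -/
noncomputable def fidelity {n : Type*} [Fintype n] [DecidableEq n] (ρ σ : Matrix n n ℂ) : ℝ :=
  traceNorm (psqrt ρ * psqrt σ)

/-- Density matrix predicate. -/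
def IsDensity {n : Type*} [Fintype n] [DecidableEq n] (ρ : Matrix n n ℂ) : Prop :=
  ρ.PosSemidef ∧ ρ.trace = 1

/-- Loewner order `A ≤ B`. -/
def loewnerLE {n : Type*} [Fintype n] [DecidableEq n] (A B : Matrix n n ℂ) : Prop :=
  (B - A).PosSemidef

/-- Purified distance `P(ρ,σ) = √(1 - F(ρ,σ)²)`. -/
noncomputable def purifiedDist {n : Type*} [Fintype n] [DecidableEq n]
    (ρ σ : Matrix n n ℂ) : ℝ :=
  Real.sqrt (1 - (fidelity ρ σ) ^ 2)

/-- Max-relative entropy `D_max(ρ‖σ) = log₂ min{λ ≥ 0 : ρ ≤ λσ}` (`⊤` if infeasible). -/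
noncomputable def Dmax {n : Type*} [Fintype n] [DecidableEq n] (ρ σ : Matrix n n ℂ) : EReal :=
  sInf {x : EReal | ∃ l : ℝ, 0 ≤ l ∧ loewnerLE ρ ((l : ℂ) • σ) ∧ x = ((Real.logb 2 l : ℝ) : EReal)}

/-- Purified-distance-smoothed max-relative entropy. -/
noncomputable def DmaxSmooth {n : Type*} [Fintype n] [DecidableEq n]
    (ε : ℝ) (ρ σ : Matrix n n ℂ) : EReal :=
  sInf {x : EReal | ∃ ω : Matrix n n ℂ, IsDensity ω ∧ purifiedDist ρ ω ≤ ε ∧ x = Dmax ω σ}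

/-- A test (POVM effect): `0 ≤ E ≤ 1`. -/
def IsTest {n : Type*} [Fintype n] [DecidableEq n] (E : Matrix n n ℂ) : Prop :=
  E.PosSemidef ∧ (1 - E).PosSemidef

/-- Hypothesis testing relative entropy
`D_H^ε(ρ‖σ) = -log₂ min{Tr σE : 0 ≤ E ≤ 1, Tr ρE ≥ 1-ε}`. -/
noncomputable def DH {n : Type*} [Fintype n] [DecidableEq n]
    (ε : ℝ) (ρ σ : Matrix n n ℂ) : ℝ :=
  - Real.logb 2 (sInf {t : ℝ | ∃ E : Matrix n n ℂ,
      IsTest E ∧ 1 - ε ≤ ((ρ * E).trace).re ∧ t = ((σ * E).trace).re})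

/-- Trace of the positive part of a Hermitian matrix: `Tr X₊ = (Tr X + ‖X‖₁)/2`. -/
noncomputable def posTrace {n : Type*} [Fintype n] [DecidableEq n] (X : Matrix n n ℂ) : ℝ :=
  ((X.trace).re + traceNorm X) / 2

/-!
Write the mixture as `ρ̄ = A Aᴴ`, where `A` is the row of blocks `√p(x) √ρₓ`. A polar
decomposition of `Aᴴ √ω` produces `B` with `B Bᴴ = ω` and `Tr (B Aᴴ) = F(ρ̄, ω)` (Uhlmann's
theorem). Cutting `B` into blocks `Bₓ` gives `ω = ∑ₓ Bₓ Bₓᴴ` and `F(ρ̄, ω) = ∑ₓ √p(x) Tr (√ρₓ Bₓ)`.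
With `qₓ = Tr (Bₓ Bₓᴴ)` and `aₓ = |Tr (√ρₓ Bₓ)| ≤ √qₓ`, Cauchy–Schwarz gives
`1 - ε² ≤ F² ≤ ∑ₓ aₓ²`, so by averaging some `x` has both `qₓ ≥ ((ε+μ)² - ε²) / |X|` and
`aₓ² ≥ (1 - (ε+μ)²) qₓ`. The state `ω' = Bₓ Bₓᴴ / qₓ` is then `(ε+μ)`-close to `ρₓ`, and
`ω' ≤ ω / qₓ ≤ |X| / ((ε+μ)² - ε²) • ω`.
-/

open Matrix
open scoped MatrixOrder

lemma trace_conjTranspose_mul_eq_sum {m n : Type*} [Fintype m] [Fintype n]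
    (K L : Matrix m n ℂ) :
    (Kᴴ * L).trace = ∑ ij : m × n, star (K ij.1 ij.2) * L ij.1 ij.2 := by
  rw [Fintype.sum_prod_type, Finset.sum_comm]
  rfl

lemma norm_trace_conjTranspose_mul_sq_le {m n : Type*} [Fintype m] [Fintype n]
    (K L : Matrix m n ℂ) :
    ‖(Kᴴ * L).trace‖ ^ 2 ≤ (Kᴴ * K).trace.re * (Lᴴ * L).trace.re := by
  have hnormSq (K : Matrix m n ℂ) : (Kᴴ * K).trace.re = ∑ ij : m × n, ‖K ij.1 ij.2‖ ^ 2 := by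
    simp [trace_conjTranspose_mul_eq_sum, Complex.re_sum, Complex.sq_norm, Complex.normSq_apply]
  rw [hnormSq, hnormSq, trace_conjTranspose_mul_eq_sum]
  calc ‖∑ ij : m × n, star (K ij.1 ij.2) * L ij.1 ij.2‖ ^ 2
      ≤ (∑ ij : m × n, ‖K ij.1 ij.2‖ * ‖L ij.1 ij.2‖) ^ 2 := by
        gcongr
        exact (norm_sum_le _ _).trans_eq (by simp)
    _ ≤ _ := Finset.sum_mul_sq_le_sq_mul_sq _ _ _

lemma Matrix.PosSemidef.ofReal_re_trace {n : Type*} [Fintype n] {A : Matrix n n ℂ}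
    (hA : A.PosSemidef) :
    (A.trace.re : ℂ) = A.trace :=
  (Complex.eq_re_of_ofReal_le (r := 0) (by simpa using hA.trace_nonneg)).symm

lemma mul_eq_sum_submatrix {l m o X α : Type*} [Fintype X] [Fintype m]
    [NonUnitalNonAssocSemiring α] (A : Matrix l (X × m) α) (B : Matrix (X × m) o α) :
    A * B = ∑ x, A.submatrix id (Prod.mk x) * B.submatrix (Prod.mk x) id := by
  ext i k
  simp [mul_apply, Matrix.sum_apply, Fintype.sum_prod_type]

lemma exists_le_and_mul_le_sq_of_le_sum_sq {X : Type*} [Fintype X] [Nonempty X] (q a : X → ℝ)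
    (hq : ∑ x, q x ≤ 1) (ha : ∀ x, a x ^ 2 ≤ q x) {t κ : ℝ} (ht : 0 ≤ t) (hκ : 0 ≤ κ)
    (hsum : t + κ * Fintype.card X ≤ ∑ x, a x ^ 2) : ∃ x, κ ≤ q x ∧ t * q x ≤ a x ^ 2 := by
  by_contra! h
  have hlt (x : X) : a x ^ 2 < κ + t * q x := by
    have hq0 : 0 ≤ q x := (sq_nonneg _).trans (ha x)
    rcases lt_or_ge (q x) κ with hqx | hqx
    · nlinarith [ha x, mul_nonneg ht hq0]
    · nlinarith [h x hqx]
  have := Finset.sum_lt_sum_of_nonempty Finset.univ_nonempty fun x _ => hlt x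
  rw [Finset.sum_add_distrib, ← Finset.mul_sum, Finset.sum_const, Finset.card_univ,
    nsmul_eq_mul] at this
  nlinarith

lemma sq_le_sum_norm_sq_of_sum_sqrt_mul_eq {X : Type*} [Fintype X] (p : X → ℝ)
    (hp : ∀ x, 0 ≤ p x) (hp1 : ∑ x, p x = 1) (c : X → ℂ) {F : ℝ}
    (hF : ∑ x, (√(p x) : ℂ) * c x = F) : F ^ 2 ≤ ∑ x, ‖c x‖ ^ 2 := by
  have hF_le : |F| ≤ ∑ x, √(p x) * ‖c x‖ := by
    rw [← Real.norm_eq_abs, ← Complex.norm_real, ← hF]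
    refine (norm_sum_le _ _).trans_eq (Finset.sum_congr rfl fun x _ => ?_)
    rw [norm_mul, Complex.norm_of_nonneg (Real.sqrt_nonneg _)]
  calc F ^ 2 = |F| ^ 2 := (sq_abs F).symm
    _ ≤ (∑ x, √(p x) * ‖c x‖) ^ 2 := pow_le_pow_left₀ (abs_nonneg F) hF_le 2
    _ ≤ (∑ x, √(p x) ^ 2) * ∑ x, ‖c x‖ ^ 2 := Finset.sum_mul_sq_le_sq_mul_sq _ _ _
    _ = ∑ x, ‖c x‖ ^ 2 := by simp [Real.sq_sqrt (hp _), hp1]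

section

variable {n m : Type*} [Fintype n] [DecidableEq n] [Fintype m] [DecidableEq m]

lemma Matrix.PosSemidef.cfcSqrt_eq_eigenvectorUnitary_mul_diagonal {A : Matrix n n ℂ}
    (hA : A.PosSemidef) :
    CFC.sqrt A = hA.1.eigenvectorUnitary.1 *
      diagonal (fun i => ((√(hA.1.eigenvalues i) : ℝ) : ℂ)) *
        (star hA.1.eigenvectorUnitary : Matrix n n ℂ) := by
  rw [CFC.sqrt_eq_real_sqrt A hA.nonneg, cfcₙ_eq_cfc, hA.1.cfc_eq, IsHermitian.cfc,
    Unitary.conjStarAlgAut_apply]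
  rfl

lemma psqrt_eq_cfcSqrt {A : Matrix n n ℂ} (hA : A.PosSemidef) : psqrt A = CFC.sqrt A := by
  rw [psqrt, dif_pos hA, hA.cfcSqrt_eq_eigenvectorUnitary_mul_diagonal]
  rfl

lemma traceNorm_eq_re_trace_sqrt (A : Matrix n n ℂ) :
    traceNorm A = (CFC.sqrt (Aᴴ * A)).trace.re := by
  rw [(posSemidef_conjTranspose_mul_self A).cfcSqrt_eq_eigenvectorUnitary_mul_diagonal]
  rfl

lemma conjTranspose_cfcSqrt (A : Matrix n n ℂ) : (CFC.sqrt A)ᴴ = CFC.sqrt A :=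
  (CFC.sqrt_nonneg A).posSemidef.1

lemma conjTranspose_psqrt (A : Matrix n n ℂ) : (psqrt A)ᴴ = psqrt A := by
  by_cases hA : A.PosSemidef
  · rw [psqrt_eq_cfcSqrt hA, conjTranspose_cfcSqrt]
  · rw [psqrt, dif_neg hA, conjTranspose_zero]

lemma psqrt_mul_self {A : Matrix n n ℂ} (hA : A.PosSemidef) : psqrt A * psqrt A = A := by
  rw [psqrt_eq_cfcSqrt hA, CFC.sqrt_mul_sqrt_self A hA.nonneg]

lemma traceNorm_nonneg (A : Matrix n n ℂ) : 0 ≤ traceNorm A := by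
  rw [traceNorm_eq_re_trace_sqrt]
  exact (Complex.nonneg_iff.mp (CFC.sqrt_nonneg _).posSemidef.trace_nonneg).1

lemma fidelity_eq_re_trace_sqrt {ρ ω : Matrix n n ℂ} (hρ : ρ.PosSemidef) (hω : ω.PosSemidef) :
    fidelity ρ ω = (CFC.sqrt (CFC.sqrt ω * ρ * CFC.sqrt ω)).trace.re := by
  rw [fidelity, traceNorm_eq_re_trace_sqrt, psqrt_eq_cfcSqrt hρ, psqrt_eq_cfcSqrt hω,
    conjTranspose_mul, conjTranspose_cfcSqrt, conjTranspose_cfcSqrt, Matrix.mul_assoc,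
    ← Matrix.mul_assoc (CFC.sqrt ρ), CFC.sqrt_mul_sqrt_self ρ hρ.nonneg, Matrix.mul_assoc]

lemma exists_isometry_mul_diagonal_sqrt (Y : Matrix n n ℂ) (e : n → ℝ)
    (hY : Yᴴ * Y = diagonal fun i => (e i : ℂ)) :
    ∃ Z : Matrix n n ℂ, Zᴴ * Z = 1 ∧ Y = Z * diagonal fun i => ((√(e i) : ℝ) : ℂ) := by
  -- The columns of `Y` are orthogonal: normalize the nonzero ones and complete them to an
  -- orthonormal basis, whose vectors are the columns of `Z`.
  let col : n → EuclideanSpace ℂ n := fun i => WithLp.toLp 2 fun j => Y j i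
  have hcol (i k : n) : inner ℂ (col i) (col k) = if i = k then (e i : ℂ) else 0 := by
    have := congrFun (congrFun hY i) k
    simp only [mul_apply, conjTranspose_apply, diagonal_apply] at this
    simp [col, PiLp.inner_apply, ← this, mul_comm]
  have he (i : n) : 0 ≤ e i := by
    have := inner_self_nonneg (𝕜 := ℂ) (x := col i)
    rw [hcol, if_pos rfl] at this
    simpa using this
  let u : n → EuclideanSpace ℂ n := fun i => (((√(e i))⁻¹ : ℝ) : ℂ) • col i
  have hu : Orthonormal ℂ ({i | e i ≠ 0}.domRestrict u) := by
    rw [orthonormal_iff_ite]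
    rintro ⟨i, hi⟩ ⟨k, hk⟩
    simp only [Set.domRestrict_apply, u, inner_smul_left, inner_smul_right, hcol,
      Subtype.mk.injEq, Complex.conj_ofReal]
    split_ifs with hik
    · subst hik
      rw [← Complex.ofReal_mul, ← Complex.ofReal_mul, ← mul_assoc, ← mul_inv,
        Real.mul_self_sqrt (he i), inv_mul_cancel₀ hi, Complex.ofReal_one]
    · simp
  obtain ⟨b, hb⟩ := hu.exists_orthonormalBasis_extension_of_card_eq finrank_euclideanSpace
  refine ⟨of fun j i => b i j, ?_, ?_⟩
  · ext i k
    have := orthonormal_iff_ite.mp b.orthonormal i k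
    simp only [PiLp.inner_apply, RCLike.inner_apply] at this
    simp [mul_apply, one_apply, ← this, mul_comm]
  · ext j i
    rw [mul_diagonal, of_apply]
    by_cases hi : e i = 0
    · have : col i = 0 := inner_self_eq_zero.mp (by rw [hcol, if_pos rfl, hi, Complex.ofReal_zero])
      simpa [hi] using congrFun (congrArg WithLp.ofLp this) j
    · rw [hb i hi]
      simp only [u, col, PiLp.smul_apply, smul_eq_mul]
      rw [mul_comm, ← mul_assoc, ← Complex.ofReal_mul,
        mul_inv_cancel₀ (Real.sqrt_ne_zero'.mpr ((he i).lt_of_ne' hi)), Complex.ofReal_one, one_mul]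

lemma exists_isometry_mul_sqrt (K : Matrix n n ℂ) :
    ∃ V : Matrix n n ℂ, Vᴴ * V = 1 ∧ K = V * CFC.sqrt (Kᴴ * K) := by
  have hA := posSemidef_conjTranspose_mul_self K
  rw [hA.cfcSqrt_eq_eigenvectorUnitary_mul_diagonal]
  set P : Matrix n n ℂ := hA.1.eigenvectorUnitary.1
  have hPP : star P * P = 1 := Unitary.coe_star_mul_self _
  have hPP' : P * star P = 1 := Unitary.coe_mul_star_self _
  have hdiag : (K * P)ᴴ * (K * P) = diagonal fun i => (hA.1.eigenvalues i : ℂ) := by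
    have := hA.1.conjStarAlgAut_star_eigenvectorUnitary
    rw [Unitary.conjStarAlgAut_apply] at this
    simpa [conjTranspose_mul, ← star_eq_conjTranspose, Matrix.mul_assoc, P, Function.comp_def]
      using this
  obtain ⟨Z, hZ, hKP⟩ := exists_isometry_mul_diagonal_sqrt (K * P) _ hdiag
  refine ⟨Z * star P, ?_, ?_⟩
  · rw [conjTranspose_mul, ← star_eq_conjTranspose, star_star, Matrix.mul_assoc,
      ← Matrix.mul_assoc Zᴴ, hZ, Matrix.one_mul, hPP']
  · calc K = K * P * star P := by rw [Matrix.mul_assoc, hPP', Matrix.mul_one]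
      _ = _ := by
        rw [hKP]
        simp only [Matrix.mul_assoc, ← Matrix.mul_assoc (star P) P, hPP, Matrix.one_mul]

lemma cfcSqrt_conjTranspose_mul_mul {A : Matrix n n ℂ} (hA : A.PosSemidef) {E : Matrix n m ℂ}
    (hE : E * Eᴴ = 1) : CFC.sqrt (Eᴴ * A * E) = Eᴴ * CFC.sqrt A * E := by
  refine CFC.sqrt_unique ?_ ((CFC.sqrt_nonneg A).posSemidef.conjTranspose_mul_mul_same E).nonneg
  calc Eᴴ * CFC.sqrt A * E * (Eᴴ * CFC.sqrt A * E)
      = Eᴴ * (CFC.sqrt A * (E * Eᴴ) * CFC.sqrt A) * E := by simp only [Matrix.mul_assoc]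
    _ = Eᴴ * A * E := by rw [hE, Matrix.mul_one, CFC.sqrt_mul_sqrt_self A hA.nonneg]

lemma exists_isometry_mul_sqrt_of_embedding (N : Matrix m n ℂ) (f : n ↪ m) :
    ∃ V : Matrix m n ℂ, Vᴴ * V = 1 ∧ N = V * CFC.sqrt (Nᴴ * N) := by
  set E : Matrix n m ℂ := (1 : Matrix m m ℂ).submatrix f id
  have hE : E * Eᴴ = 1 := by
    ext i k
    simp [E, mul_apply, one_apply, f.injective.eq_iff]
  obtain ⟨V, hV, hNE⟩ := exists_isometry_mul_sqrt (N * E)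
  rw [conjTranspose_mul, ← Matrix.mul_assoc (Eᴴ * Nᴴ), Matrix.mul_assoc Eᴴ Nᴴ N,
    cfcSqrt_conjTranspose_mul_mul (posSemidef_conjTranspose_mul_self N) hE] at hNE
  refine ⟨V * Eᴴ, ?_, ?_⟩
  · rw [conjTranspose_mul, conjTranspose_conjTranspose, Matrix.mul_assoc, ← Matrix.mul_assoc Vᴴ,
      hV, Matrix.one_mul, hE]
  · calc N = N * E * Eᴴ := by rw [Matrix.mul_assoc, hE, Matrix.mul_one]
      _ = V * Eᴴ * CFC.sqrt (Nᴴ * N) * (E * Eᴴ) := by rw [hNE]; simp only [Matrix.mul_assoc]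
      _ = V * Eᴴ * CFC.sqrt (Nᴴ * N) := by rw [hE, Matrix.mul_one]

lemma norm_trace_mul_le_traceNorm (K U : Matrix n n ℂ) (hU : Uᴴ * U = 1) :
    ‖(K * U).trace‖ ≤ traceNorm K := by
  obtain ⟨V, hV, hK⟩ := exists_isometry_mul_sqrt K
  set S := CFC.sqrt (Kᴴ * K)
  set G := CFC.sqrt S
  have hG : Gᴴ = G := conjTranspose_cfcSqrt S
  have hGG : G * G = S := CFC.sqrt_mul_sqrt_self S (CFC.sqrt_nonneg _)
  have hUV : (U * V)ᴴ * (U * V) = 1 := by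
    rw [conjTranspose_mul, Matrix.mul_assoc, ← Matrix.mul_assoc Uᴴ, hU, Matrix.one_mul, hV]
  have htrace : (K * U).trace = (Gᴴ * (U * V * G)).trace := by
    rw [hK, hG, ← hGG, ← Matrix.mul_assoc, ← Matrix.mul_assoc, Matrix.mul_assoc (V * G),
      trace_mul_comm]
    simp only [Matrix.mul_assoc]
  have hnorm : (U * V * G)ᴴ * (U * V * G) = Gᴴ * G := by
    rw [conjTranspose_mul, Matrix.mul_assoc, ← Matrix.mul_assoc (U * V)ᴴ, hUV, Matrix.one_mul]
  have hS : (Gᴴ * G).trace.re = traceNorm K := by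
    rw [hG, hGG, traceNorm_eq_re_trace_sqrt]
  have := norm_trace_conjTranspose_mul_sq_le G (U * V * G)
  rw [hnorm, hS, ← htrace, ← sq] at this
  exact (pow_le_pow_iff_left₀ (norm_nonneg _) (traceNorm_nonneg K) two_ne_zero).mp this

lemma norm_trace_psqrt_mul_le_fidelity (ρ B : Matrix n n ℂ) :
    ‖(psqrt ρ * B).trace‖ ≤ fidelity ρ (B * Bᴴ) := by
  obtain ⟨V, hV, hB⟩ := exists_isometry_mul_sqrt Bᴴ
  have hB' : B = CFC.sqrt (B * Bᴴ) * Vᴴ := by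
    simpa [conjTranspose_mul, conjTranspose_cfcSqrt] using congrArg conjTranspose hB
  rw [fidelity, psqrt_eq_cfcSqrt (posSemidef_self_mul_conjTranspose B)]
  conv_lhs => rw [hB', ← Matrix.mul_assoc]
  refine norm_trace_mul_le_traceNorm _ _ ?_
  rw [conjTranspose_conjTranspose]
  exact mul_eq_one_comm.mp hV

lemma exists_mul_conjTranspose_eq_and_trace_eq_fidelity (A : Matrix n m ℂ) (f : n ↪ m)
    {ω : Matrix n n ℂ} (hω : ω.PosSemidef) :
    ∃ B : Matrix n m ℂ, B * Bᴴ = ω ∧ (B * Aᴴ).trace = fidelity (A * Aᴴ) ω := by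
  set S := CFC.sqrt ω
  have hS : Sᴴ = S := conjTranspose_cfcSqrt ω
  obtain ⟨V, hV, hN⟩ := exists_isometry_mul_sqrt_of_embedding (Aᴴ * S) f
  set H := CFC.sqrt ((Aᴴ * S)ᴴ * (Aᴴ * S))
  refine ⟨S * Vᴴ, ?_, ?_⟩
  · rw [conjTranspose_mul, conjTranspose_conjTranspose, hS, Matrix.mul_assoc,
      ← Matrix.mul_assoc Vᴴ, hV, Matrix.one_mul, CFC.sqrt_mul_sqrt_self ω hω.nonneg]
  · have htrace : (S * Vᴴ * Aᴴ).trace = H.trace := by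
      rw [trace_mul_cycle, hN, trace_mul_cycle, hV, Matrix.one_mul]
    have hfid : fidelity (A * Aᴴ) ω = H.trace.re := by
      rw [fidelity_eq_re_trace_sqrt (posSemidef_self_mul_conjTranspose A) hω]
      simp only [H, conjTranspose_mul, conjTranspose_conjTranspose, hS, S, Matrix.mul_assoc]
    rw [htrace, hfid]
    exact ((CFC.sqrt_nonneg _).posSemidef.ofReal_re_trace).symm

lemma exists_sum_mul_conjTranspose_eq_and_sum_trace_eq_fidelity {X : Type*} [Fintype X]
    [Nonempty X] (p : X → ℝ) (hp : ∀ x, 0 ≤ p x) (ρ : X → Matrix n n ℂ) (hρ : ∀ x, (ρ x).PosSemidef)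
    {ω : Matrix n n ℂ} (hω : ω.PosSemidef) :
    ∃ B : X → Matrix n n ℂ, ∑ x, B x * (B x)ᴴ = ω ∧
      ∑ x, (√(p x) : ℂ) * (psqrt (ρ x) * B x).trace = fidelity (∑ x, p x • ρ x) ω := by
  classical
  let A : Matrix n (X × n) ℂ := of fun i xj => (√(p xj.1) : ℂ) * psqrt (ρ xj.1) i xj.2
  have hA (x : X) : A.submatrix id (Prod.mk x) = (√(p x) : ℂ) • psqrt (ρ x) := by
    ext i j
    simp [A]
  have hAA : A * Aᴴ = ∑ x, p x • ρ x := by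
    rw [mul_eq_sum_submatrix]
    refine Finset.sum_congr rfl fun x _ => ?_
    rw [← conjTranspose_submatrix, hA, conjTranspose_smul, conjTranspose_psqrt, smul_mul_smul,
      psqrt_mul_self (hρ x), Complex.star_def, Complex.conj_ofReal, ← Complex.ofReal_mul,
      Real.mul_self_sqrt (hp x), Complex.coe_smul]
  -- The embedding `i ↦ (x₀, i)` only witnesses that `A` has at least as many columns as rows.
  obtain ⟨B, hBB, htrace⟩ := exists_mul_conjTranspose_eq_and_trace_eq_fidelity A
    (Function.Embedding.sectR (Classical.arbitrary X) n) hω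
  refine ⟨fun x => B.submatrix id (Prod.mk x), ?_, ?_⟩
  · rw [← hBB, mul_eq_sum_submatrix B]
    rfl
  · rw [← hAA, ← htrace, mul_eq_sum_submatrix, trace_sum]
    refine Finset.sum_congr rfl fun x _ => ?_
    rw [← conjTranspose_submatrix, hA, conjTranspose_smul, conjTranspose_psqrt, Matrix.mul_smul,
      trace_smul, trace_mul_comm]
    simp

lemma purifiedDist_le_iff {ρ ω : Matrix n n ℂ} {δ : ℝ} :
    purifiedDist ρ ω ≤ δ ↔ 0 ≤ δ ∧ 1 - δ ^ 2 ≤ fidelity ρ ω ^ 2 := by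
  rw [purifiedDist, Real.sqrt_le_iff, sub_le_comm]

lemma isDensity_inv_smul {A : Matrix n n ℂ} (hA : A.PosSemidef) {q : ℝ} (hq : 0 < q)
    (hAq : A.trace = q) : IsDensity (q⁻¹ • A) := by
  refine ⟨hA.smul (inv_nonneg.mpr hq.le), ?_⟩
  rw [trace_smul, hAq, Complex.real_smul, ← Complex.ofReal_mul, inv_mul_cancel₀ hq.ne',
    Complex.ofReal_one]

lemma purifiedDist_inv_smul_mul_conjTranspose_le {ρ B : Matrix n n ℂ} {q δ : ℝ} (hq : 0 < q)
    (hδ : 0 ≤ δ) (h : (1 - δ ^ 2) * q ≤ ‖(psqrt ρ * B).trace‖ ^ 2) :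
    purifiedDist ρ (q⁻¹ • (B * Bᴴ)) ≤ δ := by
  set B' := (√q)⁻¹ • B
  have hB' : B' * B'ᴴ = q⁻¹ • (B * Bᴴ) := by
    rw [conjTranspose_smul, star_trivial, smul_mul_smul, ← mul_inv, Real.mul_self_sqrt hq.le]
  have hnorm : ‖(psqrt ρ * B').trace‖ ^ 2 = ‖(psqrt ρ * B).trace‖ ^ 2 / q := by
    rw [Matrix.mul_smul, trace_smul, norm_smul, mul_pow, Real.norm_eq_abs, sq_abs, inv_pow,
      Real.sq_sqrt hq.le, inv_mul_eq_div]
  refine purifiedDist_le_iff.mpr ⟨hδ, ?_⟩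
  calc 1 - δ ^ 2 ≤ ‖(psqrt ρ * B').trace‖ ^ 2 := by rwa [hnorm, le_div_iff₀ hq]
    _ ≤ fidelity ρ (q⁻¹ • (B * Bᴴ)) ^ 2 := by
      rw [← hB']
      exact pow_le_pow_left₀ (norm_nonneg _) (norm_trace_psqrt_mul_le_fidelity ρ B') 2

theorem exists_index_purifiedDist_le_and_le_smul {X : Type*} [Fintype X] [Nonempty X]
    (p : X → ℝ) (hp : ∀ x, 0 ≤ p x) (hp1 : ∑ x, p x = 1)
    (ρ : X → Matrix n n ℂ) (hρ : ∀ x, IsDensity (ρ x)) {ω : Matrix n n ℂ} (hω : IsDensity ω)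
    {ε δ : ℝ} (hεδ : ε ^ 2 < δ ^ 2) (hδ0 : 0 ≤ δ) (hδ1 : δ ≤ 1)
    (hdist : purifiedDist (∑ x, p x • ρ x) ω ≤ ε) :
    ∃ x, ∃ ω', IsDensity ω' ∧ purifiedDist (ρ x) ω' ≤ δ ∧
      ω' ≤ ((Fintype.card X : ℝ) / (δ ^ 2 - ε ^ 2)) • ω := by
  obtain ⟨B, hBω, hBF⟩ :=
    exists_sum_mul_conjTranspose_eq_and_sum_trace_eq_fidelity p hp ρ (fun x => (hρ x).1) hω.1
  set q : X → ℝ := fun x => (B x * (B x)ᴴ).trace.re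
  set a : X → ℝ := fun x => ‖(psqrt (ρ x) * B x).trace‖
  have hq (x : X) : (B x * (B x)ᴴ).trace = q x :=
    (posSemidef_self_mul_conjTranspose (B x)).ofReal_re_trace.symm
  have hq1 : ∑ x, q x = 1 := by
    simpa [trace_sum, Complex.re_sum, hω.2] using congrArg (fun M => M.trace.re) hBω
  have ha (x : X) : a x ^ 2 ≤ q x := by
    have := norm_trace_conjTranspose_mul_sq_le (psqrt (ρ x)) (B x)
    rwa [conjTranspose_psqrt, psqrt_mul_self (hρ x).1, (hρ x).2, Complex.one_re, one_mul,
      trace_mul_comm (B x)ᴴ] at this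
  have hsum : 1 - ε ^ 2 ≤ ∑ x, a x ^ 2 :=
    (purifiedDist_le_iff.mp hdist).2.trans (sq_le_sum_norm_sq_of_sum_sqrt_mul_eq p hp hp1 _ hBF)
  have hcard : (0 : ℝ) < Fintype.card X := Nat.cast_pos.mpr Fintype.card_pos
  have hκ : 0 < (δ ^ 2 - ε ^ 2) / Fintype.card X := div_pos (sub_pos.mpr hεδ) hcard
  obtain ⟨x, hκx, htx⟩ := exists_le_and_mul_le_sq_of_le_sum_sq q a hq1.le ha (t := 1 - δ ^ 2)
    (sub_nonneg.mpr (pow_le_one₀ hδ0 hδ1)) hκ.le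
    (by rw [div_mul_cancel₀ _ hcard.ne']; linarith)
  have hqx : 0 < q x := hκ.trans_le hκx
  refine ⟨x, (q x)⁻¹ • (B x * (B x)ᴴ),
    isDensity_inv_smul (posSemidef_self_mul_conjTranspose _) hqx (hq x),
    purifiedDist_inv_smul_mul_conjTranspose_le hqx hδ0 htx, ?_⟩
  have hBx : B x * (B x)ᴴ ≤ ω := hBω ▸ Finset.single_le_sum
    (fun y _ => (posSemidef_self_mul_conjTranspose (B y)).nonneg) (Finset.mem_univ x)
  calc (q x)⁻¹ • (B x * (B x)ᴴ) ≤ (q x)⁻¹ • ω :=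
        smul_le_smul_of_nonneg_left hBx (inv_nonneg.mpr hqx.le)
    _ ≤ _ := smul_le_smul_of_nonneg_right (by rw [← inv_div]; exact inv_anti₀ hκ hκx)
        hω.1.nonneg

lemma ne_zero_of_loewnerLE_real_smul {ω σ : Matrix n n ℂ} (hω : IsDensity ω) {l : ℝ}
    (h : loewnerLE ω ((l : ℂ) • σ)) : l ≠ 0 := by
  rintro rfl
  have hω0 : ω ≤ ((0 : ℝ) : ℂ) • σ := h
  rw [Complex.ofReal_zero, zero_smul] at hω0
  simpa [le_antisymm hω0 hω.1.nonneg] using hω.2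

lemma loewnerLE_real_smul_of_le_smul {ω' ω σ : Matrix n n ℂ} {C l : ℝ} (h' : ω' ≤ C • ω)
    (h : loewnerLE ω ((l : ℂ) • σ)) (hC : 0 ≤ C) : loewnerLE ω' (((l * C : ℝ) : ℂ) • σ) :=
  calc ω' ≤ C • ω := h'
    _ ≤ C • ((l : ℂ) • σ) := smul_le_smul_of_nonneg_left h hC
    _ = ((l * C : ℝ) : ℂ) • σ := by rw [← Complex.coe_smul, smul_smul, mul_comm]; push_cast; rfl

end

lemma EReal.le_sInf_add_coe {a : EReal} {S : Set EReal} {L : ℝ} (h : ∀ s ∈ S, a ≤ s + L) :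
    a ≤ sInf S + L := by
  have hL (b c : EReal) : b - L ≤ c ↔ b ≤ c + L :=
    EReal.sub_le_iff_le_add (.inl (EReal.coe_ne_bot L)) (.inl (EReal.coe_ne_top L))
  exact (hL _ _).mp (le_sInf fun s hs => (hL _ _).mpr (h s hs))

theorem approx_quasi_concavity_smooth_dmax_general {d : ℕ} {X : Type*} [Fintype X] [Nonempty X]
    (p : X → ℝ) (hp : ∀ x, 0 ≤ p x) (hp1 : ∑ x, p x = 1)
    (ρ : X → Matrix (Fin d) (Fin d) ℂ) (hρ : ∀ x, IsDensity (ρ x))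
    (σ : Matrix (Fin d) (Fin d) ℂ)
    (ε μ : ℝ) (hε0 : 0 < ε) (hμ0 : 0 < μ)
    (hεμ : ε + μ ≤ 1) :
    ⨅ x, DmaxSmooth (ε + μ) (ρ x) σ
      ≤ DmaxSmooth ε (∑ x, p x • ρ x) σ
        + ((Real.logb 2 ((Fintype.card X : ℝ) / ((ε + μ) ^ 2 - ε ^ 2)) : ℝ) : EReal) := by
  set C := (Fintype.card X : ℝ) / ((ε + μ) ^ 2 - ε ^ 2)
  have hC : 0 < C := div_pos (Nat.cast_pos.mpr Fintype.card_pos) (by nlinarith)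
  refine EReal.le_sInf_add_coe ?_
  rintro _ ⟨ω, hω, hdist, rfl⟩
  refine EReal.le_sInf_add_coe ?_
  rintro _ ⟨l, hl, hωl, rfl⟩
  obtain ⟨x, ω', hω', hdist', hω'ω⟩ := exists_index_purifiedDist_le_and_le_smul p hp hp1 ρ hρ hω
    (by nlinarith) (by linarith) hεμ hdist
  calc ⨅ y, DmaxSmooth (ε + μ) (ρ y) σ ≤ DmaxSmooth (ε + μ) (ρ x) σ := iInf_le _ x
    _ ≤ Dmax ω' σ := sInf_le ⟨ω', hω', hdist', rfl⟩
    _ ≤ (Real.logb 2 (l * C) : EReal) :=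
      sInf_le ⟨l * C, mul_nonneg hl hC.le, loewnerLE_real_smul_of_le_smul hω'ω hωl hC.le, rfl⟩
    _ = _ := by
      rw [Real.logb_mul (ne_zero_of_loewnerLE_real_smul hω hωl) hC.ne', EReal.coe_add]

theorem approx_quasi_concavity_smooth_dmax {d : ℕ} {X : Type*} [Fintype X] [Nonempty X]
    (p : X → ℝ) (hp : ∀ x, 0 ≤ p x) (hp1 : ∑ x, p x = 1)
    (ρ : X → Matrix (Fin d) (Fin d) ℂ) (hρ : ∀ x, IsDensity (ρ x))
    (σ : Matrix (Fin d) (Fin d) ℂ) (hσ : IsDensity σ)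
    (ε μ : ℝ) (hε0 : 0 < ε) (hε1 : ε < 1) (hμ0 : 0 < μ) (hμ1 : μ < 1)
    (hεμ : ε + μ ≤ 1) :
    ⨅ x, DmaxSmooth (ε + μ) (ρ x) σ
      ≤ DmaxSmooth ε (∑ x, p x • ρ x) σ
        + ((Real.logb 2 ((Fintype.card X : ℝ) / ((ε + μ) ^ 2 - ε ^ 2)) : ℝ) : EReal) :=
  approx_quasi_concavity_smooth_dmax_general p hp hp1 ρ hρ σ ε μ hε0 hμ0 hεμ

end
end

section
/- Purified distance bound from joint fidelity loss: let ε ∈ (0,1) and δ ∈ [0, √(1−ε²)). Suppose (p(x))_x, (q(x))_x are probability distributions on a finite set X and F_x ∈ [0,1] are numbers with Σ_x √(p(x)q(x)) F_x = √(1−ε²). Then, letting X_δ = { x : q(x) ≥ δ²/|X| }, there exists x̄ ∈ X_δ with F_{x̄} ≥ √(1−ε²−δ²). -/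
/-! Writing `√(p x q x) F x = √(p x) · (√(q x) F x)`, a single Cauchy–Schwarz gives
`1 - ε² ≤ ∑ₓ q x F x²`. On `X_δ` each `F x²` is at most `F x₀²` for a maximiser `x₀` of `F` on `X_δ`,
while off `X_δ` we only use `F x² ≤ 1`: the `q`-mass there is at most `|X| · δ²/|X| = δ²`. Hence
`1 - ε² ≤ F x₀² + δ²`. The same mass bound, with `δ² < 1`, shows that `X_δ` is nonempty. -/

open Finset

theorem sq_sum_sqrt_mul_mul_le {ι : Type*} (s : Finset ι) {p q : ι → ℝ}
    (hp : ∀ x, 0 ≤ p x) (hq : ∀ x, 0 ≤ q x) (F : ι → ℝ) :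
    (∑ x ∈ s, √(p x * q x) * F x) ^ 2 ≤ (∑ x ∈ s, p x) * ∑ x ∈ s, q x * F x ^ 2 := by
  simpa [Real.sqrt_mul (hp _), mul_assoc, mul_pow, Real.sq_sqrt (hp _), Real.sq_sqrt (hq _)]
    using sum_mul_sq_le_sq_mul_sq s (fun x ↦ √(p x)) (fun x ↦ √(q x) * F x)

theorem sum_filter_lt_le_card_mul {ι : Type*} (s : Finset ι) (q : ι → ℝ) {c : ℝ} (hc : 0 ≤ c) :
    ∑ x ∈ s with q x < c, q x ≤ #s * c := by
  calc ∑ x ∈ s with q x < c, q x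
      ≤ (#{x ∈ s | q x < c} : ℝ) * c := by
        simpa using sum_le_card_nsmul {x ∈ s | q x < c} q c fun x hx ↦ (mem_filter.1 hx).2.le
    _ ≤ #s * c := by gcongr; exact filter_subset _ s

theorem sum_mul_sq_le_sq_mul_sum_add_sum_filter_not {ι : Type*} (s : Finset ι) (P : ι → Prop)
    [DecidablePred P] {q F : ι → ℝ} (m : ℝ) (hq : ∀ x, 0 ≤ q x) (hF : ∀ x, F x ^ 2 ≤ 1)
    (hFP : ∀ x, P x → F x ^ 2 ≤ m ^ 2) :
    ∑ x ∈ s, q x * F x ^ 2 ≤ m ^ 2 * ∑ x ∈ s, q x + ∑ x ∈ s with ¬ P x, q x := by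
  rw [mul_sum, sum_filter, ← sum_add_distrib]
  refine sum_le_sum fun x _ ↦ ?_
  have hmq : 0 ≤ m ^ 2 * q x := mul_nonneg (sq_nonneg m) (hq x)
  by_cases hx : P x
  · simpa [hx, mul_comm] using mul_le_mul_of_nonneg_left (hFP x hx) (hq x)
  · simpa [hx] using (mul_le_of_le_one_right (hq x) (hF x)).trans (le_add_of_nonneg_left hmq)

theorem purified_distance_from_joint_fidelity_loss_general {X : Type*} [Fintype X]
    (ε δ : ℝ)
    (hδ0 : 0 ≤ δ) (hδ1 : δ < Real.sqrt (1 - ε ^ 2))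
    (p q : X → ℝ) (hp : ∀ x, 0 ≤ p x) (hp1 : ∑ x, p x = 1)
    (hq : ∀ x, 0 ≤ q x) (hq1 : ∑ x, q x = 1)
    (F : X → ℝ) (hF : ∀ x, F x ∈ Set.Icc (0 : ℝ) 1)
    (hsum : ∑ x, Real.sqrt (p x * q x) * F x = Real.sqrt (1 - ε ^ 2)) :
    ∃ x : X, δ ^ 2 / (Fintype.card X : ℝ) ≤ q x ∧
      Real.sqrt (1 - ε ^ 2 - δ ^ 2) ≤ F x := by
  classical
  set c := δ ^ 2 / (Fintype.card X : ℝ)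
  have hpos : 0 < 1 - ε ^ 2 := Real.sqrt_pos.1 (hδ0.trans_lt hδ1)
  have hδsq : δ ^ 2 < 1 - ε ^ 2 := (Real.lt_sqrt hδ0).1 hδ1
  have hlight : ∑ x with q x < c, q x ≤ δ ^ 2 :=
    (sum_filter_lt_le_card_mul _ q (by positivity)).trans <| by
      rw [card_univ, mul_div_assoc']
      exact div_le_of_le_mul₀ (Nat.cast_nonneg _) (sq_nonneg δ) (mul_comm _ _).le
  have hne : (univ.filter (c ≤ q ·)).Nonempty := by
    by_contra h
    have hall : ∀ x, q x < c := by simpa [filter_eq_empty_iff] using h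
    have : ∑ x, q x ≤ δ ^ 2 := by simpa [hall] using hlight
    nlinarith [sq_nonneg ε]
  obtain ⟨x₀, hx₀, hmax⟩ := exists_max_image _ F hne
  have hFsq : ∀ x, F x ^ 2 ≤ 1 := fun x ↦ pow_le_one₀ (hF x).1 (hF x).2
  have hF_le : ∀ x, c ≤ q x → F x ^ 2 ≤ F x₀ ^ 2 := fun x hx ↦
    pow_le_pow_left₀ (hF x).1 (hmax x (by simpa using hx)) 2
  have key : 1 - ε ^ 2 ≤ F x₀ ^ 2 + δ ^ 2 :=
    calc 1 - ε ^ 2 = (∑ x, √(p x * q x) * F x) ^ 2 := by rw [hsum, Real.sq_sqrt hpos.le]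
      _ ≤ (∑ x, p x) * ∑ x, q x * F x ^ 2 := sq_sum_sqrt_mul_mul_le _ hp hq F
      _ ≤ F x₀ ^ 2 * ∑ x, q x + ∑ x with ¬ c ≤ q x, q x := by
        rw [hp1, one_mul]
        exact sum_mul_sq_le_sq_mul_sum_add_sum_filter_not _ (c ≤ q ·) _ hq hFsq hF_le
      _ ≤ F x₀ ^ 2 + δ ^ 2 := by simpa [hq1] using hlight
  exact ⟨x₀, (mem_filter.1 hx₀).2, Real.sqrt_le_iff.2 ⟨(hF x₀).1, by linarith⟩⟩

theorem purified_distance_from_joint_fidelity_loss {X : Type*} [Fintype X] [Nonempty X]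
    (ε δ : ℝ) (hε0 : 0 < ε) (hε1 : ε < 1)
    (hδ0 : 0 ≤ δ) (hδ1 : δ < Real.sqrt (1 - ε ^ 2))
    (p q : X → ℝ) (hp : ∀ x, 0 ≤ p x) (hp1 : ∑ x, p x = 1)
    (hq : ∀ x, 0 ≤ q x) (hq1 : ∑ x, q x = 1)
    (F : X → ℝ) (hF : ∀ x, F x ∈ Set.Icc (0 : ℝ) 1)
    (hsum : ∑ x, Real.sqrt (p x * q x) * F x = Real.sqrt (1 - ε ^ 2)) :
    ∃ x : X, δ ^ 2 / (Fintype.card X : ℝ) ≤ q x ∧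
      Real.sqrt (1 - ε ^ 2 - δ ^ 2) ≤ F x :=
  purified_distance_from_joint_fidelity_loss_general ε δ hδ0 hδ1 p q hp hp1 hq hq1 F hF hsum
end
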